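/- arXiv:math/0607658 — 3 statements merged into one kernel-verified Lean document; each statement's English description precedes it below -/
import Mathlib

section
/- Let ψ: ℝ → ℝ be measurable and suppose there exist C>0 and δ>1 such that |ψ(x)| ≤ C·(1+x²)^{-δ/2} for all x ∈ ℝ. For a bounded interval (c,d), y₁, y₂ ∈ ℝ and a > 0, set h_a(y₁,y₂) = (1/a)·∫_c^d ψ((x−y₁)/a)·ψ((x−y₂)/a) dx. Then for y₁ ≠ y₂ there is a constant C' (independent of a) such that |h_a(y₁,y₂)| ≤ C'·a^δ/|y₁−y₂|^δ; in particular lim_{a→0⁺} h_a(y₁,y₂) = 0 whenever y₁ ≠ y₂. Moreover, sup over a>0, y₁, y₂ of |h_a(y₁,y₂)| is finite. -/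
open MeasureTheory Filter Real Set Topology

/-!
Write `u = (x - y₁)/a`, `v = (x - y₂)/a`, so `u - v = (y₂ - y₁)/a`. One of `|u|, |v|` is at least
`|u - v|/2`, and there the decay bound makes `ψ` at most `C (2a/|y₁ - y₂|)^δ`; the other factor is
bounded by `C (1 + t²)^(-δ/2)` at a rescaled translate, whose integral is `a` times that of the
integrable weight `(1 + t²)^(-δ/2)`. The same argument with `(1 + t²)^(-δ/2) ≤ 1` gives the uniform
bound.
-/

noncomputable def decayWeight (δ t : ℝ) : ℝ := (1 + t ^ 2) ^ (-δ / 2)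

noncomputable def crossTerm (ψ : ℝ → ℝ) (s : Set ℝ) (a y₁ y₂ : ℝ) : ℝ :=
  (1 / a) * ∫ x in s, ψ ((x - y₁) / a) * ψ ((x - y₂) / a)

section DecayWeight

variable {δ : ℝ}

lemma decayWeight_pos (δ t : ℝ) : 0 < decayWeight δ t :=
  rpow_pos_of_pos (by positivity) _

lemma decayWeight_le_one (hδ : 0 ≤ δ) (t : ℝ) : decayWeight δ t ≤ 1 :=
  rpow_le_one_of_one_le_of_nonpos (by nlinarith [sq_nonneg t]) (by linarith)

lemma decayWeight_le_rpow_neg (hδ : 0 ≤ δ) {ρ t : ℝ} (hρ : 0 < ρ) (ht : ρ ≤ |t|) :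
    decayWeight δ t ≤ ρ ^ (-δ) := by
  have hsq : ρ ^ 2 ≤ 1 + t ^ 2 := by nlinarith [sq_abs t]
  calc decayWeight δ t ≤ (ρ ^ 2) ^ (-δ / 2) :=
        rpow_le_rpow_of_nonpos (by positivity) hsq (by linarith)
    _ = ρ ^ (-δ) := by
        rw [← rpow_natCast, ← rpow_mul hρ.le]
        congr 1
        ring

lemma integrable_decayWeight (hδ : 1 < δ) : Integrable (decayWeight δ) := by
  unfold decayWeight
  simpa [Real.norm_eq_abs, sq_abs] using
    integrable_rpow_neg_one_add_norm_sq (E := ℝ) (μ := volume) (r := δ) (by simpa using hδ)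

lemma integral_decayWeight_pos (hδ : 1 < δ) : 0 < ∫ t, decayWeight δ t := by
  rw [integral_pos_iff_support_of_nonneg (fun t => (decayWeight_pos δ t).le)
    (integrable_decayWeight hδ)]
  simp [eq_univ_of_forall fun t => Function.mem_support.mpr (decayWeight_pos δ t).ne']

end DecayWeight

lemma integral_comp_sub_div_eq {f : ℝ → ℝ} {a : ℝ} (ha : 0 < a) (y : ℝ) :
    ∫ x, f ((x - y) / a) = a * ∫ t, f t := by
  rw [integral_sub_right_eq_self (fun x => f (x / a)) y, Measure.integral_comp_div f a,
    abs_of_pos ha, smul_eq_mul]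

lemma setIntegral_comp_sub_div_le {f : ℝ → ℝ} (hf : Integrable f) (hf₀ : ∀ t, 0 ≤ f t)
    (s : Set ℝ) {a : ℝ} (ha : 0 < a) (y : ℝ) :
    ∫ x in s, f ((x - y) / a) ≤ a * ∫ t, f t :=
  (integral_comp_sub_div_eq ha y).symm ▸
    setIntegral_le_integral ((hf.comp_div ha.ne').comp_sub_right y) (.of_forall fun _ => hf₀ _)

lemma abs_crossTerm_le {ψ f : ℝ → ℝ} (hf : Integrable f) (hf₀ : ∀ t, 0 ≤ f t) (s : Set ℝ)
    {a y₁ y₂ K : ℝ} (ha : 0 < a) (hK : 0 ≤ K)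
    (hψ : ∀ x, |ψ ((x - y₁) / a) * ψ ((x - y₂) / a)| ≤
      K * (f ((x - y₁) / a) + f ((x - y₂) / a))) :
    |crossTerm ψ s a y₁ y₂| ≤ 2 * K * ∫ t, f t := by
  have hint : ∀ y, Integrable (fun x => f ((x - y) / a)) (volume.restrict s) := fun y =>
    ((hf.comp_div ha.ne').comp_sub_right y).restrict
  have hmajorant : Integrable (fun x => K * (f ((x - y₁) / a) + f ((x - y₂) / a)))
      (volume.restrict s) := ((hint y₁).add (hint y₂)).const_mul K
  have hI : |∫ x in s, ψ ((x - y₁) / a) * ψ ((x - y₂) / a)| ≤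
      K * (a * (∫ t, f t) + a * ∫ t, f t) :=
    calc |∫ x in s, ψ ((x - y₁) / a) * ψ ((x - y₂) / a)|
        ≤ ∫ x in s, K * (f ((x - y₁) / a) + f ((x - y₂) / a)) :=
          (norm_eq_abs _).symm.trans_le (norm_integral_le_of_norm_le hmajorant (.of_forall hψ))
      _ = K * ((∫ x in s, f ((x - y₁) / a)) + ∫ x in s, f ((x - y₂) / a)) := by
          rw [integral_const_mul, integral_add (hint y₁) (hint y₂)]
      _ ≤ K * (a * (∫ t, f t) + a * ∫ t, f t) := by
          gcongr <;> exact setIntegral_comp_sub_div_le hf hf₀ s ha _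
  rw [crossTerm, abs_mul, abs_of_pos (one_div_pos.mpr ha)]
  calc 1 / a * |∫ x in s, ψ ((x - y₁) / a) * ψ ((x - y₂) / a)|
      ≤ 1 / a * (K * (a * (∫ t, f t) + a * ∫ t, f t)) := by gcongr
    _ = 2 * K * ∫ t, f t := by field_simp; ring

section Decay

variable {ψ : ℝ → ℝ} {C δ : ℝ}

lemma abs_mul_le_sq_mul_add (hδ : 0 ≤ δ) (hC : 0 ≤ C)
    (hψ : ∀ x, |ψ x| ≤ C * decayWeight δ x) (u v : ℝ) :
    |ψ u * ψ v| ≤ C ^ 2 * (decayWeight δ u + decayWeight δ v) := by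
  have hv : |ψ v| ≤ C := (hψ v).trans (mul_le_of_le_one_right hC (decayWeight_le_one hδ v))
  calc |ψ u * ψ v| ≤ C * decayWeight δ u * C := by
        rw [abs_mul]
        exact mul_le_mul (hψ u) hv (abs_nonneg _) (mul_nonneg hC (decayWeight_pos δ u).le)
    _ ≤ C ^ 2 * (decayWeight δ u + decayWeight δ v) := by
        nlinarith [decayWeight_pos δ v, sq_nonneg C]

lemma abs_mul_le_of_le_abs (hδ : 0 ≤ δ) (hC : 0 ≤ C)
    (hψ : ∀ x, |ψ x| ≤ C * decayWeight δ x) {ρ u : ℝ} (hρ : 0 < ρ) (hu : ρ ≤ |u|) (v : ℝ) :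
    |ψ u * ψ v| ≤ C ^ 2 * ρ ^ (-δ) * decayWeight δ v := by
  have hu' : |ψ u| ≤ C * ρ ^ (-δ) :=
    (hψ u).trans (mul_le_mul_of_nonneg_left (decayWeight_le_rpow_neg hδ hρ hu) hC)
  calc |ψ u * ψ v| ≤ C * ρ ^ (-δ) * (C * decayWeight δ v) := by
        rw [abs_mul]; exact mul_le_mul hu' (hψ v) (abs_nonneg _) (by positivity)
    _ = C ^ 2 * ρ ^ (-δ) * decayWeight δ v := by ring

lemma abs_mul_le_of_ne (hδ : 0 ≤ δ) (hC : 0 ≤ C)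
    (hψ : ∀ x, |ψ x| ≤ C * decayWeight δ x) {u v : ℝ} (huv : u ≠ v) :
    |ψ u * ψ v| ≤ C ^ 2 * (|u - v| / 2) ^ (-δ) * (decayWeight δ u + decayWeight δ v) := by
  have hρ : 0 < |u - v| / 2 := by simpa [sub_eq_zero] using huv
  have hK : 0 ≤ C ^ 2 * (|u - v| / 2) ^ (-δ) := by positivity
  have hu₀ := (decayWeight_pos δ u).le
  have hv₀ := (decayWeight_pos δ v).le
  rcases le_or_gt (|u - v| / 2) |u| with hu | hu
  · calc |ψ u * ψ v| ≤ C ^ 2 * (|u - v| / 2) ^ (-δ) * decayWeight δ v :=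
          abs_mul_le_of_le_abs hδ hC hψ hρ hu v
      _ ≤ _ := by gcongr; linarith
  · have hv : |v - u| / 2 ≤ |v| := by linarith [abs_sub u v, abs_sub_comm u v]
    calc |ψ u * ψ v| = |ψ v * ψ u| := by rw [mul_comm]
      _ ≤ C ^ 2 * (|v - u| / 2) ^ (-δ) * decayWeight δ u :=
          abs_mul_le_of_le_abs hδ hC hψ (by rwa [abs_sub_comm]) hv u
      _ ≤ _ := by rw [abs_sub_comm]; gcongr; linarith

end Decay

lemma tendsto_nhdsGT_zero_of_abs_le_mul_rpow {g : ℝ → ℝ} {K δ : ℝ} (hδ : 0 < δ)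
    (hg : ∀ a, 0 < a → |g a| ≤ K * a ^ δ) : Tendsto g (𝓝[>] 0) (𝓝 0) := by
  have hpow : Tendsto (fun a : ℝ => K * a ^ δ) (𝓝[>] 0) (𝓝 0) := by
    have h := ((continuousAt_rpow_const 0 δ (Or.inr hδ.le)).tendsto.const_mul K)
    rw [zero_rpow hδ.ne', mul_zero] at h
    exact h.mono_left nhdsWithin_le_nhds
  exact squeeze_zero_norm' (eventually_nhdsWithin_of_forall hg) hpow

theorem cross_term_estimate_general
    (ψ : ℝ → ℝ)
    (C δ : ℝ) (hC : 0 < C) (hδ : 1 < δ)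
    (hdecay : ∀ x : ℝ, |ψ x| ≤ C * (1 + x ^ 2) ^ (-δ / 2))
    (c d : ℝ) :
    (∀ y₁ y₂ : ℝ, y₁ ≠ y₂ →
      (∃ C' > (0:ℝ), ∀ a : ℝ, 0 < a →
        |(1 / a) * ∫ x in Ioo c d, ψ ((x - y₁) / a) * ψ ((x - y₂) / a)| ≤
          C' * a ^ δ / |y₁ - y₂| ^ δ) ∧
      Tendsto (fun a : ℝ =>
          (1 / a) * ∫ x in Ioo c d, ψ ((x - y₁) / a) * ψ ((x - y₂) / a))
        (𝓝[>] 0) (𝓝 0)) ∧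
    ∃ M : ℝ, ∀ a : ℝ, 0 < a → ∀ y₁ y₂ : ℝ,
      |(1 / a) * ∫ x in Ioo c d, ψ ((x - y₁) / a) * ψ ((x - y₂) / a)| ≤ M := by
  have hδ₀ : 0 ≤ δ := by linarith
  have hw := integrable_decayWeight hδ
  have hw₀ : ∀ t, 0 ≤ decayWeight δ t := fun t => (decayWeight_pos δ t).le
  set I := ∫ t, decayWeight δ t
  refine ⟨fun y₁ y₂ hne => ?_, 2 * C ^ 2 * I, fun a ha y₁ y₂ =>
    abs_crossTerm_le hw hw₀ _ ha (by positivity) fun x =>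
      abs_mul_le_sq_mul_add hδ₀ hC.le hdecay _ _⟩
  have hr : 0 < |y₁ - y₂| := abs_pos.mpr (sub_ne_zero.mpr hne)
  have hbound : ∀ a, 0 < a → |crossTerm ψ (Ioo c d) a y₁ y₂| ≤
      2 * C ^ 2 * 2 ^ δ * I * a ^ δ / |y₁ - y₂| ^ δ := by
    intro a ha
    have hsep : ∀ x, (|(x - y₁) / a - (x - y₂) / a| / 2) ^ (-δ) =
        2 ^ δ * a ^ δ / |y₁ - y₂| ^ δ := by
      intro x
      rw [show (x - y₁) / a - (x - y₂) / a = -((y₁ - y₂) / a) by field_simp; ring, abs_neg,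
        abs_div, abs_of_pos ha, rpow_neg (by positivity), ← inv_rpow (by positivity),
        show (|y₁ - y₂| / a / 2)⁻¹ = 2 * a / |y₁ - y₂| by field_simp,
        div_rpow (by positivity) hr.le, mul_rpow (by norm_num) ha.le]
    refine (abs_crossTerm_le (K := C ^ 2 * (2 ^ δ * a ^ δ / |y₁ - y₂| ^ δ)) hw hw₀ _ ha
      (by positivity) fun x => ?_).trans_eq (by ring)
    rw [← hsep x]
    exact abs_mul_le_of_ne hδ₀ hC.le hdecay
      (by rwa [Ne, div_left_inj' ha.ne', sub_right_inj])
  exact ⟨⟨_, by have := integral_decayWeight_pos hδ; positivity, hbound⟩,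
    tendsto_nhdsGT_zero_of_abs_le_mul_rpow (by linarith) fun a ha =>
      (hbound a ha).trans_eq (mul_div_right_comm _ _ _)⟩

/-- The cross-term estimate in the proof of Theorem 2.4 (1): for
`h_a(y₁,y₂) = (1/a) ∫_c^d ψ((x-y₁)/a) ψ((x-y₂)/a) dx` one has, for `y₁ ≠ y₂`, a bound
`|h_a(y₁,y₂)| ≤ C' a^δ / |y₁-y₂|^δ` (whence `h_a(y₁,y₂) → 0` as `a → 0⁺`), and `h_a` is
bounded uniformly in `a`, `y₁`, `y₂`. -/
theorem cross_term_estimate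
    (ψ : ℝ → ℝ) (hmeas : Measurable ψ)
    (C δ : ℝ) (hC : 0 < C) (hδ : 1 < δ)
    (hdecay : ∀ x : ℝ, |ψ x| ≤ C * (1 + x ^ 2) ^ (-δ / 2))
    (c d : ℝ) (hcd : c < d) :
    (∀ y₁ y₂ : ℝ, y₁ ≠ y₂ →
      (∃ C' > (0:ℝ), ∀ a : ℝ, 0 < a →
        |(1 / a) * ∫ x in Ioo c d, ψ ((x - y₁) / a) * ψ ((x - y₂) / a)| ≤
          C' * a ^ δ / |y₁ - y₂| ^ δ) ∧
      Tendsto (fun a : ℝ =>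
          (1 / a) * ∫ x in Ioo c d, ψ ((x - y₁) / a) * ψ ((x - y₂) / a))
        (𝓝[>] 0) (𝓝 0)) ∧
    ∃ M : ℝ, ∀ a : ℝ, 0 < a → ∀ y₁ y₂ : ℝ,
      |(1 / a) * ∫ x in Ioo c d, ψ ((x - y₁) / a) * ψ ((x - y₂) / a)| ≤ M :=
  cross_term_estimate_general ψ C δ hC hδ hdecay c d
end

section
/- Let ψ: ℝ → ℝ be C¹ with ψ(0)=1, ψ even, and suppose there exist C>0 and δ>1 such that |ψ(x)| + |x·ψ'(x)| ≤ C·(1+x²)^{-δ/2} for all x ∈ ℝ. Let (c,d) be a bounded interval with c < d and let ν be a finite measure on ℝ that is singular with respect to Lebesgue measure and whose topological support is contained in [c−1, d+1]. Then for every p with 0 < p < 1, lim_{a→0⁺} ∫_c^d |(ψ̃_a * ν)(x)|^p dx = 0, where ψ̃_a(x) = (1/a)·ψ(x/a). -/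
open MeasureTheory Filter Real Set Topology

open scoped ENNReal

/-- Hölder-type estimate: for `0 < p < 1`,
`∫⁻ g^p ≤ (∫⁻ g)^p * (vol A)^(1-p)`. -/
private lemma holder_rpow_aux {A : Set ℝ} {g : ℝ → ℝ≥0∞}
    (hg : AEMeasurable g (volume.restrict A)) {p : ℝ} (hp0 : 0 < p) (hp1 : p < 1) :
    ∫⁻ x in A, (g x) ^ p ≤ (∫⁻ x in A, g x) ^ p * (volume A) ^ (1 - p) := by
  have hpq : Real.HolderConjugate (1 / p) (1 / (1 - p)) := by
    rw [Real.holderConjugate_iff]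
    constructor
    · rw [lt_div_iff₀ hp0]; linarith
    · simp only [one_div, inv_inv]; ring
  have h := ENNReal.lintegral_mul_le_Lp_mul_Lq (volume.restrict A) hpq
      (f := fun x => (g x) ^ p) (g := fun _ => (1 : ℝ≥0∞))
      (hg.pow_const p) aemeasurable_const
  have h1 : ∀ x : ℝ, ((g x) ^ p) ^ (1 / p) = g x := by
    intro x
    rw [← ENNReal.rpow_mul, mul_one_div_cancel hp0.ne', ENNReal.rpow_one]
  simp only [Pi.mul_apply, mul_one, ENNReal.one_rpow, h1] at h
  calc ∫⁻ x in A, (g x) ^ p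
      ≤ (∫⁻ x in A, g x) ^ (1 / (1 / p)) *
          (∫⁻ _ in A, (1 : ℝ≥0∞)) ^ (1 / (1 / (1 - p))) := by
        simpa [one_div_one_div] using h
    _ = (∫⁻ x in A, g x) ^ p * (volume A) ^ (1 - p) := by
        rw [one_div_one_div, one_div_one_div, setLIntegral_one]

private lemma ofReal_abs_integral_le (μ : Measure ℝ) (f : ℝ → ℝ) :
    ENNReal.ofReal |∫ y, f y ∂μ| ≤ ∫⁻ y, ENNReal.ofReal |f y| ∂μ := by
  calc ENNReal.ofReal |∫ y, f y ∂μ| = (‖∫ y, f y ∂μ‖₊ : ℝ≥0∞) := by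
        rw [← Real.norm_eq_abs]; exact ofReal_norm _
    _ ≤ ∫⁻ y, (‖f y‖₊ : ℝ≥0∞) ∂μ := enorm_integral_le_lintegral_enorm _
    _ = ∫⁻ y, ENNReal.ofReal |f y| ∂μ := by
        exact lintegral_congr fun y => by rw [← Real.norm_eq_abs]; exact (ofReal_norm _).symm

/-- The `L¹`-norm of the rescaled kernel: for `a > 0`,
`∫⁻ x, (1/a)|ψ((x-y)/a)| dx = ∫ |ψ|`. -/
private lemma kernel_lintegral_eq {ψ : ℝ → ℝ} (hψInt : Integrable ψ (volume : Measure ℝ))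
    {a : ℝ} (ha : 0 < a) (y : ℝ) :
    ∫⁻ x, ENNReal.ofReal ((1 / a) * |ψ ((x - y) / a)|) ∂(volume : Measure ℝ)
      = ENNReal.ofReal (∫ x, |ψ x|) := by
  have hint : Integrable (fun x => (1 / a) * |ψ ((x - y) / a)|) (volume : Measure ℝ) := by
    have h1 : Integrable (fun x : ℝ => |ψ (x / a)|) (volume : Measure ℝ) :=
      hψInt.abs.comp_div ha.ne'
    exact (h1.comp_sub_right y).const_mul (1 / a)
  rw [← ofReal_integral_eq_lintegral_ofReal hint
      (ae_of_all _ fun x => by positivity)]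
  congr 1
  calc ∫ x, (1 / a) * |ψ ((x - y) / a)|
      = (1 / a) * ∫ x, |ψ ((x - y) / a)| := integral_const_mul _ _
    _ = (1 / a) * ∫ x, |ψ (x / a)| :=
        congrArg _ (integral_sub_right_eq_self (fun x => |ψ (x / a)|) y)
    _ = (1 / a) * (|a| • ∫ x, |ψ x|) :=
        congrArg _ (MeasureTheory.Measure.integral_comp_div (fun x => |ψ x|) a)
    _ = ∫ x, |ψ x| := by
        rw [abs_of_pos ha, smul_eq_mul]
        field_simp

/-- Tonelli bound for the convolution: the double lintegral is at most `‖ψ‖₁ * μ'(univ)`. -/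
private lemma conv_lintegral_bound {ψ : ℝ → ℝ} (hψc : Continuous ψ)
    (hψInt : Integrable ψ (volume : Measure ℝ))
    {a : ℝ} (ha : 0 < a) (μ' : Measure ℝ) [IsFiniteMeasure μ'] (A : Set ℝ) :
    ∫⁻ x in A, (∫⁻ y, ENNReal.ofReal ((1 / a) * |ψ ((x - y) / a)|) ∂μ') ∂volume
      ≤ ENNReal.ofReal (∫ x, |ψ x|) * μ' Set.univ := by
  have hmeas : AEMeasurable (Function.uncurry fun x y =>
      ENNReal.ofReal ((1 / a) * |ψ ((x - y) / a)|)) ((volume.restrict A).prod μ') := by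
    apply Measurable.aemeasurable
    apply Measurable.ennreal_ofReal
    exact (continuous_const.mul
      ((hψc.comp ((continuous_fst.sub continuous_snd).div_const a)).abs)).measurable
  rw [lintegral_lintegral_swap hmeas]
  calc ∫⁻ y, (∫⁻ x in A, ENNReal.ofReal ((1 / a) * |ψ ((x - y) / a)|) ∂volume) ∂μ'
      ≤ ∫⁻ _, ENNReal.ofReal (∫ x, |ψ x|) ∂μ' := by
        apply lintegral_mono
        intro y
        exact (setLIntegral_le_lintegral _ _).trans (kernel_lintegral_eq hψInt ha y).le
    _ = ENNReal.ofReal (∫ x, |ψ x|) * μ' Set.univ := lintegral_const _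

/-- Continuity in `x` of the convolution against a finite measure. -/
private lemma cont_conv {ψ : ℝ → ℝ} (hψc : Continuous ψ) {C : ℝ}
    (hb : ∀ x, |ψ x| ≤ C) (a : ℝ) (μ' : Measure ℝ) [IsFiniteMeasure μ'] :
    Continuous fun x => ∫ y, (1 / a) * ψ ((x - y) / a) ∂μ' := by
  apply continuous_of_dominated (bound := fun _ => |1 / a| * C)
  · intro x
    exact ((continuous_const.mul
      (hψc.comp ((continuous_const.sub continuous_id).div_const a)))).aestronglyMeasurable
  · intro x
    apply ae_of_all
    intro y
    rw [Real.norm_eq_abs, abs_mul]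
    exact mul_le_mul_of_nonneg_left (hb _) (abs_nonneg _)
  · exact integrable_const _
  · apply ae_of_all
    intro y
    exact continuous_const.mul
      (hψc.comp (((continuous_id.sub continuous_const)).div_const a))

/-- Integrability of the kernel against a finite measure. -/
private lemma integrable_kernel {ψ : ℝ → ℝ} (hψc : Continuous ψ) {C : ℝ}
    (hb : ∀ x, |ψ x| ≤ C) (a x : ℝ) (μ' : Measure ℝ) [IsFiniteMeasure μ'] :
    Integrable (fun y => (1 / a) * ψ ((x - y) / a)) μ' := by
  apply Integrable.mono' (integrable_const (|1 / a| * C))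
  · exact ((continuous_const.mul
      (hψc.comp ((continuous_const.sub continuous_id).div_const a)))).aestronglyMeasurable
  · apply ae_of_all
    intro y
    rw [Real.norm_eq_abs, abs_mul]
    exact mul_le_mul_of_nonneg_left (hb _) (abs_nonneg _)

set_option maxHeartbeats 2000000 in
/-- The singular-part estimate in the proof of Theorem 2.4 (2): if `ν` is a finite measure,
singular with respect to Lebesgue measure and supported in `[c-1, d+1]`, then for every
`0 < p < 1`, `∫_c^d |(ψ̃_a * ν)(x)|^p dx → 0` as `a → 0⁺`. -/
theorem singular_part_Lp_vanishes
    (ψ : ℝ → ℝ) (hC1 : ContDiff ℝ 1 ψ) (hψ0 : ψ 0 = 1)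
    (heven : ∀ x : ℝ, ψ (-x) = ψ x)
    (hdecay : ∃ C > (0:ℝ), ∃ δ > (1:ℝ), ∀ x : ℝ,
      |ψ x| + |x * deriv ψ x| ≤ C * (1 + x ^ 2) ^ (-δ / 2))
    (c d : ℝ) (hcd : c < d)
    (ν : Measure ℝ) [IsFiniteMeasure ν]
    (hsing : ν ⟂ₘ (volume : Measure ℝ))
    (hsupp : ν (Icc (c - 1) (d + 1))ᶜ = 0)
    (p : ℝ) (hp0 : 0 < p) (hp1 : p < 1) :
    Tendsto (fun a : ℝ =>
        ∫ x in Ioo c d, |∫ y : ℝ, (1 / a) * ψ ((x - y) / a) ∂ν| ^ p)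
      (𝓝[>] 0) (𝓝 0) := by
  classical
  obtain ⟨C, hC, δ, hδ, hdec⟩ := hdecay
  have hψc : Continuous ψ := hC1.continuous
  have hbC : ∀ x, |ψ x| ≤ C := by
    intro x
    have h1 := hdec x
    have h2 : (1 + x ^ 2) ^ (-δ / 2) ≤ 1 :=
      Real.rpow_le_one_of_one_le_of_nonpos (by nlinarith) (by linarith)
    nlinarith [abs_nonneg (x * deriv ψ x), abs_nonneg (ψ x),
      mul_le_mul_of_nonneg_left h2 hC.le]
  have hmaj : Integrable (fun x : ℝ => C * (1 + x ^ 2) ^ (-δ / 2)) volume := by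
    have h := integrable_rpow_neg_one_add_norm_sq (E := ℝ) (μ := volume) (r := δ)
      (by simpa using hδ)
    simpa [Real.norm_eq_abs, sq_abs] using h.const_mul C
  have hψInt : Integrable ψ volume := by
    refine hmaj.mono' hψc.aestronglyMeasurable (ae_of_all _ fun x => ?_)
    rw [Real.norm_eq_abs]
    nlinarith [hdec x, abs_nonneg (x * deriv ψ x)]
  have hIψ0 : 0 ≤ ∫ x, |ψ x| := integral_nonneg fun x => abs_nonneg _
  -- reduce to the `lintegral` statement
  suffices h0 : Tendsto (fun a : ℝ =>
      ∫⁻ x in Ioo c d, (ENNReal.ofReal |∫ y, (1 / a) * ψ ((x - y) / a) ∂ν|) ^ p)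
      (𝓝[>] 0) (𝓝 0) by
    have key : ∀ a : ℝ, ∫ x in Ioo c d, |∫ y, (1 / a) * ψ ((x - y) / a) ∂ν| ^ p
        = (∫⁻ x in Ioo c d, (ENNReal.ofReal |∫ y, (1 / a) * ψ ((x - y) / a) ∂ν|) ^ p).toReal := by
      intro a
      rw [integral_eq_lintegral_of_nonneg_ae
        (ae_of_all _ fun x => Real.rpow_nonneg (abs_nonneg _) p) ?_]
      · congr 1
        refine lintegral_congr fun x => ?_
        exact (ENNReal.ofReal_rpow_of_nonneg (abs_nonneg _) hp0.le).symm
      · apply Continuous.aestronglyMeasurable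
        apply continuous_iff_continuousAt.2
        intro x
        exact (Real.continuousAt_rpow_const _ p (Or.inr hp0.le)).comp
          ((cont_conv hψc hbC a ν).abs.continuousAt)
    have h1 := (ENNReal.tendsto_toReal (ENNReal.zero_ne_top)).comp h0
    simp only [ENNReal.toReal_zero] at h1
    exact h1.congr fun a => (key a).symm
  rw [ENNReal.tendsto_nhds_zero]
  intro η hη
  set η' := min 1 η with hη'def
  have hη'top : η' ≠ ⊤ := ne_top_of_le_ne_top ENNReal.one_ne_top (min_le_left _ _)
  have hη'0 : η' ≠ 0 := (lt_min one_pos hη).ne'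
  have hθ : 0 < η'.toReal := ENNReal.toReal_pos hη'0 hη'top
  set θ := η'.toReal with hθdef
  have hofθ : ENNReal.ofReal θ = η' := ENNReal.ofReal_toReal hη'top
  suffices h : ∀ᶠ a in 𝓝[>] (0:ℝ),
      (∫⁻ x in Ioo c d, (ENNReal.ofReal |∫ y, (1 / a) * ψ ((x - y) / a) ∂ν|) ^ p)
        ≤ ENNReal.ofReal θ by
    filter_upwards [h] with a ha
    exact ha.trans (hofθ.le.trans (min_le_right _ _))
  obtain ⟨s, hsm, hνs, hvs⟩ := hsing
  have hνT0 : (0:ℝ) ≤ (ν Set.univ).toReal := ENNReal.toReal_nonneg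
  have hc₁0 : (0:ℝ) ≤ (d - c) ^ (1 - p) * (∫ x, |ψ x|) ^ p :=
    mul_nonneg (Real.rpow_nonneg (by linarith) _) (Real.rpow_nonneg hIψ0 _)
  have hc₂0 : (0:ℝ) ≤ ((∫ x, |ψ x|) * (ν Set.univ).toReal) ^ p :=
    Real.rpow_nonneg (mul_nonneg hIψ0 hνT0) _
  -- choose ε > 0 making the two ε-terms small
  have hεtend : Tendsto (fun ε : ℝ =>
      ((d - c) ^ (1 - p) * (∫ x, |ψ x|) ^ p) * ε ^ p
        + (((∫ x, |ψ x|) * (ν Set.univ).toReal) ^ p) * ε ^ (1 - p)) (𝓝[>] 0) (𝓝 0) := by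
    have e1 : Tendsto (fun ε : ℝ => ε ^ p) (𝓝 0) (𝓝 0) := by
      have := (Real.continuousAt_rpow_const 0 p (Or.inr hp0.le)).tendsto
      simpa [Real.zero_rpow hp0.ne'] using this
    have e2 : Tendsto (fun ε : ℝ => ε ^ (1 - p)) (𝓝 0) (𝓝 0) := by
      have := (Real.continuousAt_rpow_const 0 (1 - p) (Or.inr (by linarith))).tendsto
      simpa [Real.zero_rpow (show (1:ℝ) - p ≠ 0 by linarith)] using this
    have := ((e1.const_mul ((d - c) ^ (1 - p) * (∫ x, |ψ x|) ^ p)).add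
      (e2.const_mul (((∫ x, |ψ x|) * (ν Set.univ).toReal) ^ p))).mono_left
        (nhdsWithin_le_nhds : 𝓝[>] (0:ℝ) ≤ 𝓝 0)
    simpa using this
  obtain ⟨ε, hεsmall, hε0⟩ :=
    ((hεtend.eventually (gt_mem_nhds (half_pos hθ))).and self_mem_nhdsWithin).exists
  replace hε0 : (0:ℝ) < ε := hε0
  have hεE0 : (0:ℝ≥0∞) < ENNReal.ofReal ε := ENNReal.ofReal_pos.2 hε0
  -- compact carrier K
  have hAm : MeasurableSet (sᶜ ∩ Icc (c - 1) (d + 1)) := hsm.compl.inter measurableSet_Icc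
  obtain ⟨K, hKA, hKc, hKlt⟩ := hAm.exists_isCompact_lt_add (measure_ne_top ν _) hεE0.ne'
  have hKm : MeasurableSet K := hKc.measurableSet
  have hνKc : ν Kᶜ ≤ ENNReal.ofReal ε := by
    have h1 : ν ((sᶜ ∩ Icc (c - 1) (d + 1)) \ K) < ENNReal.ofReal ε :=
      measure_diff_lt_of_lt_add hKm.nullMeasurableSet hKA (measure_ne_top _ _) hKlt
    have h2 : ν (sᶜ ∩ Icc (c - 1) (d + 1))ᶜ = 0 := by
      rw [compl_inter]
      refine le_antisymm ((measure_union_le _ _).trans ?_) zero_le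
      rw [compl_compl]
      simp [hνs, hsupp]
    calc ν Kᶜ ≤ ν (((sᶜ ∩ Icc (c - 1) (d + 1)) \ K) ∪ (sᶜ ∩ Icc (c - 1) (d + 1))ᶜ) := by
          apply measure_mono
          intro x hx
          by_cases hxA : x ∈ sᶜ ∩ Icc (c - 1) (d + 1)
          · exact Or.inl ⟨hxA, hx⟩
          · exact Or.inr hxA
      _ ≤ ν ((sᶜ ∩ Icc (c - 1) (d + 1)) \ K) + ν (sᶜ ∩ Icc (c - 1) (d + 1))ᶜ :=
          measure_union_le _ _
      _ ≤ ENNReal.ofReal ε := by rw [h2, add_zero]; exact h1.le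
  have hKnull : volume K = 0 := measure_mono_null (hKA.trans inter_subset_left) hvs
  -- a small thickening of K has small volume
  have hthick : Tendsto (fun r => volume (Metric.thickening r K)) (𝓝[>] 0) (𝓝 0) := by
    have := tendsto_measure_thickening_of_isClosed (μ := volume)
      ⟨1, one_pos, ((measure_mono (Metric.thickening_subset_cthickening _ _)).trans_lt
        hKc.cthickening.measure_lt_top).ne⟩ hKc.isClosed
    rwa [hKnull] at this
  obtain ⟨ρ, hρsmall, hρpos⟩ :=
    ((hthick.eventually (gt_mem_nhds hεE0)).and self_mem_nhdsWithin).exists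
  replace hρpos : (0:ℝ) < ρ := hρpos
  set U := Metric.thickening ρ K with hUdef
  have hUm : MeasurableSet U := Metric.isOpen_thickening.measurableSet
  -- the a-term tends to 0
  have hMtend : Tendsto (fun a : ℝ =>
      (d - c) * (C * ρ ^ (-δ) * a ^ (δ - 1) * (ν Set.univ).toReal) ^ p) (𝓝[>] 0) (𝓝 0) := by
    have e0 : Tendsto (fun a : ℝ => a ^ (δ - 1)) (𝓝[>] 0) (𝓝 0) := by
      have := (Real.continuousAt_rpow_const 0 (δ - 1) (Or.inr (by linarith))).tendsto
      simpa [Real.zero_rpow (show δ - 1 ≠ 0 by linarith)] using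
        this.mono_left (nhdsWithin_le_nhds : 𝓝[>] (0:ℝ) ≤ 𝓝 0)
    have e1 : Tendsto (fun a : ℝ => C * ρ ^ (-δ) * a ^ (δ - 1) * (ν Set.univ).toReal)
        (𝓝[>] 0) (𝓝 0) := by
      have := (e0.const_mul (C * ρ ^ (-δ))).mul_const (ν Set.univ).toReal
      simpa using this
    have e2 : Tendsto (fun t : ℝ => t ^ p) (𝓝 0) (𝓝 0) := by
      have := (Real.continuousAt_rpow_const 0 p (Or.inr hp0.le)).tendsto
      simpa [Real.zero_rpow hp0.ne'] using this
    have := (e2.comp e1).const_mul (d - c)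
    simpa using this
  filter_upwards [self_mem_nhdsWithin,
    hMtend.eventually (gt_mem_nhds (half_pos hθ))] with a haI haM
  replace haI : (0:ℝ) < a := haI
  have ha : 0 < a := haI
  have hM0' : (0:ℝ) ≤ C * ρ ^ (-δ) * a ^ (δ - 1) := by positivity
  have hM0 : (0:ℝ) ≤ C * ρ ^ (-δ) * a ^ (δ - 1) * (ν Set.univ).toReal :=
    mul_nonneg hM0' hνT0
  -- notation
  have hG₁c : Continuous fun x => ∫ y, (1 / a) * ψ ((x - y) / a) ∂(ν.restrict K) :=
    cont_conv hψc hbC a _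
  have hG₂c : Continuous fun x => ∫ y, (1 / a) * ψ ((x - y) / a) ∂(ν.restrict Kᶜ) :=
    cont_conv hψc hbC a _
  have hG₁m : Measurable fun x =>
      ENNReal.ofReal |∫ y, (1 / a) * ψ ((x - y) / a) ∂(ν.restrict K)| :=
    hG₁c.abs.measurable.ennreal_ofReal
  have hG₂m : Measurable fun x =>
      ENNReal.ofReal |∫ y, (1 / a) * ψ ((x - y) / a) ∂(ν.restrict Kᶜ)| :=
    hG₂c.abs.measurable.ennreal_ofReal
  have hsplit : ∀ x : ℝ, (∫ y, (1 / a) * ψ ((x - y) / a) ∂ν)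
      = (∫ y, (1 / a) * ψ ((x - y) / a) ∂(ν.restrict K))
        + ∫ y, (1 / a) * ψ ((x - y) / a) ∂(ν.restrict Kᶜ) := by
    intro x
    rw [← integral_add_measure (integrable_kernel hψc hbC a x _)
      (integrable_kernel hψc hbC a x _), Measure.restrict_add_restrict_compl hKm]
  -- Step B : split the lintegral
  have hB : (∫⁻ x in Ioo c d, (ENNReal.ofReal |∫ y, (1 / a) * ψ ((x - y) / a) ∂ν|) ^ p)
      ≤ (∫⁻ x in Ioo c d,
          (ENNReal.ofReal |∫ y, (1 / a) * ψ ((x - y) / a) ∂(ν.restrict K)|) ^ p)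
        + ∫⁻ x in Ioo c d,
          (ENNReal.ofReal |∫ y, (1 / a) * ψ ((x - y) / a) ∂(ν.restrict Kᶜ)|) ^ p := by
    rw [← lintegral_add_left (hG₁m.pow_const p)]
    refine lintegral_mono fun x => ?_
    calc (ENNReal.ofReal |∫ y, (1 / a) * ψ ((x - y) / a) ∂ν|) ^ p
        ≤ ((ENNReal.ofReal |∫ y, (1 / a) * ψ ((x - y) / a) ∂(ν.restrict K)|)
            + ENNReal.ofReal |∫ y, (1 / a) * ψ ((x - y) / a) ∂(ν.restrict Kᶜ)|) ^ p := by
          refine ENNReal.rpow_le_rpow ?_ hp0.le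
          rw [hsplit x, ← ENNReal.ofReal_add (abs_nonneg _) (abs_nonneg _)]
          exact ENNReal.ofReal_le_ofReal (abs_add_le _ _)
      _ ≤ _ := ENNReal.rpow_add_le_add_rpow _ _ hp0.le hp1.le
  -- pointwise domination by the double lintegral
  have hdom : ∀ (μ' : Measure ℝ) (x : ℝ),
      ENNReal.ofReal |∫ y, (1 / a) * ψ ((x - y) / a) ∂μ'|
        ≤ ∫⁻ y, ENNReal.ofReal ((1 / a) * |ψ ((x - y) / a)|) ∂μ' := by
    intro μ' x
    refine (ofReal_abs_integral_le μ' _).trans ?_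
    refine lintegral_mono fun y => ENNReal.ofReal_le_ofReal ?_
    rw [abs_mul, abs_of_pos (by positivity : (0:ℝ) < 1 / a)]
  -- Term from ν.restrict Kᶜ
  have hT2 : (∫⁻ x in Ioo c d,
        (ENNReal.ofReal |∫ y, (1 / a) * ψ ((x - y) / a) ∂(ν.restrict Kᶜ)|) ^ p)
      ≤ ENNReal.ofReal (((d - c) ^ (1 - p) * (∫ x, |ψ x|) ^ p) * ε ^ p) := by
    have h1 : (∫⁻ x in Ioo c d,
        ENNReal.ofReal |∫ y, (1 / a) * ψ ((x - y) / a) ∂(ν.restrict Kᶜ)|)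
        ≤ ENNReal.ofReal (∫ x, |ψ x|) * ENNReal.ofReal ε := by
      calc (∫⁻ x in Ioo c d,
            ENNReal.ofReal |∫ y, (1 / a) * ψ ((x - y) / a) ∂(ν.restrict Kᶜ)|)
          ≤ ∫⁻ x in Ioo c d,
              (∫⁻ y, ENNReal.ofReal ((1 / a) * |ψ ((x - y) / a)|) ∂(ν.restrict Kᶜ)) :=
            lintegral_mono (hdom _)
        _ ≤ ENNReal.ofReal (∫ x, |ψ x|) * (ν.restrict Kᶜ) Set.univ :=
            conv_lintegral_bound hψc hψInt ha _ _
        _ ≤ ENNReal.ofReal (∫ x, |ψ x|) * ENNReal.ofReal ε := by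
            rw [Measure.restrict_apply_univ]
            exact mul_le_mul_right hνKc _
    calc (∫⁻ x in Ioo c d,
          (ENNReal.ofReal |∫ y, (1 / a) * ψ ((x - y) / a) ∂(ν.restrict Kᶜ)|) ^ p)
        ≤ (∫⁻ x in Ioo c d,
            ENNReal.ofReal |∫ y, (1 / a) * ψ ((x - y) / a) ∂(ν.restrict Kᶜ)|) ^ p
            * (volume (Ioo c d)) ^ (1 - p) :=
          holder_rpow_aux hG₂m.aemeasurable hp0 hp1
      _ ≤ (ENNReal.ofReal (∫ x, |ψ x|) * ENNReal.ofReal ε) ^ p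
            * (ENNReal.ofReal (d - c)) ^ (1 - p) := by
          rw [Real.volume_Ioo]
          exact mul_le_mul' (ENNReal.rpow_le_rpow h1 hp0.le) le_rfl
      _ = ENNReal.ofReal (((d - c) ^ (1 - p) * (∫ x, |ψ x|) ^ p) * ε ^ p) := by
          rw [← ENNReal.ofReal_mul hIψ0,
            ENNReal.ofReal_rpow_of_nonneg (mul_nonneg hIψ0 hε0.le) hp0.le,
            ENNReal.ofReal_rpow_of_nonneg (by linarith : (0:ℝ) ≤ d - c) (by linarith),
            ← ENNReal.ofReal_mul (Real.rpow_nonneg (mul_nonneg hIψ0 hε0.le) _)]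
          congr 1
          rw [Real.mul_rpow hIψ0 hε0.le]
          ring
  -- Term from ν.restrict K
  have hT1 : (∫⁻ x in Ioo c d,
        (ENNReal.ofReal |∫ y, (1 / a) * ψ ((x - y) / a) ∂(ν.restrict K)|) ^ p)
      ≤ ENNReal.ofReal ((((∫ x, |ψ x|) * (ν Set.univ).toReal) ^ p) * ε ^ (1 - p))
        + ENNReal.ofReal ((d - c) * (C * ρ ^ (-δ) * a ^ (δ - 1) * (ν Set.univ).toReal) ^ p) := by
    have hsplitm : (∫⁻ x in Ioo c d,
          (ENNReal.ofReal |∫ y, (1 / a) * ψ ((x - y) / a) ∂(ν.restrict K)|) ^ p)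
        = (∫⁻ x in Ioo c d ∩ U,
            (ENNReal.ofReal |∫ y, (1 / a) * ψ ((x - y) / a) ∂(ν.restrict K)|) ^ p)
          + ∫⁻ x in Ioo c d \ U,
            (ENNReal.ofReal |∫ y, (1 / a) * ψ ((x - y) / a) ∂(ν.restrict K)|) ^ p := by
      rw [← lintegral_add_measure, Measure.restrict_inter_add_diff _ hUm]
    rw [hsplitm]
    have hT1a : (∫⁻ x in Ioo c d ∩ U,
          (ENNReal.ofReal |∫ y, (1 / a) * ψ ((x - y) / a) ∂(ν.restrict K)|) ^ p)
        ≤ ENNReal.ofReal ((((∫ x, |ψ x|) * (ν Set.univ).toReal) ^ p) * ε ^ (1 - p)) := by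
      have h1 : (∫⁻ x in Ioo c d ∩ U,
            ENNReal.ofReal |∫ y, (1 / a) * ψ ((x - y) / a) ∂(ν.restrict K)|)
          ≤ ENNReal.ofReal (∫ x, |ψ x|) * ν Set.univ := by
        calc (∫⁻ x in Ioo c d ∩ U,
              ENNReal.ofReal |∫ y, (1 / a) * ψ ((x - y) / a) ∂(ν.restrict K)|)
            ≤ ∫⁻ x in Ioo c d ∩ U,
                (∫⁻ y, ENNReal.ofReal ((1 / a) * |ψ ((x - y) / a)|) ∂(ν.restrict K)) :=
              lintegral_mono (hdom _)
          _ ≤ ENNReal.ofReal (∫ x, |ψ x|) * (ν.restrict K) Set.univ :=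
              conv_lintegral_bound hψc hψInt ha _ _
          _ ≤ ENNReal.ofReal (∫ x, |ψ x|) * ν Set.univ := by
              rw [Measure.restrict_apply_univ]
              exact mul_le_mul_right (measure_mono (Set.subset_univ K)) _
      calc (∫⁻ x in Ioo c d ∩ U,
            (ENNReal.ofReal |∫ y, (1 / a) * ψ ((x - y) / a) ∂(ν.restrict K)|) ^ p)
          ≤ (∫⁻ x in Ioo c d ∩ U,
              ENNReal.ofReal |∫ y, (1 / a) * ψ ((x - y) / a) ∂(ν.restrict K)|) ^ p
              * (volume (Ioo c d ∩ U)) ^ (1 - p) :=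
            holder_rpow_aux hG₁m.aemeasurable hp0 hp1
        _ ≤ (ENNReal.ofReal (∫ x, |ψ x|) * ν Set.univ) ^ p
              * (ENNReal.ofReal ε) ^ (1 - p) :=
            mul_le_mul' (ENNReal.rpow_le_rpow h1 hp0.le)
              (ENNReal.rpow_le_rpow
                ((measure_mono Set.inter_subset_right).trans hρsmall.le) (by linarith))
        _ = ENNReal.ofReal ((((∫ x, |ψ x|) * (ν Set.univ).toReal) ^ p) * ε ^ (1 - p)) := by
            rw [show ν Set.univ = ENNReal.ofReal (ν Set.univ).toReal from
              (ENNReal.ofReal_toReal (measure_ne_top ν _)).symm,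
              ← ENNReal.ofReal_mul hIψ0,
              ENNReal.ofReal_rpow_of_nonneg (mul_nonneg hIψ0 hνT0) hp0.le,
              ENNReal.ofReal_rpow_of_nonneg hε0.le (by linarith),
              ← ENNReal.ofReal_mul (Real.rpow_nonneg (mul_nonneg hIψ0 hνT0) _),
              ENNReal.toReal_ofReal ENNReal.toReal_nonneg]
    have hT1b : (∫⁻ x in Ioo c d \ U,
          (ENNReal.ofReal |∫ y, (1 / a) * ψ ((x - y) / a) ∂(ν.restrict K)|) ^ p)
        ≤ ENNReal.ofReal ((d - c) * (C * ρ ^ (-δ) * a ^ (δ - 1) * (ν Set.univ).toReal) ^ p) := by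
      have hpt : ∀ x ∈ Ioo c d \ U,
          |∫ y, (1 / a) * ψ ((x - y) / a) ∂(ν.restrict K)|
            ≤ C * ρ ^ (-δ) * a ^ (δ - 1) * (ν Set.univ).toReal := by
        intro x hx
        have hbound : ∀ᵐ y ∂(ν.restrict K),
            ‖(1 / a) * ψ ((x - y) / a)‖ ≤ C * ρ ^ (-δ) * a ^ (δ - 1) := by
          filter_upwards [ae_restrict_mem hKm] with y hyK
          have hdist : ρ ≤ |x - y| := by
            by_contra hcon
            push_neg at hcon
            exact hx.2 (Metric.mem_thickening_iff.2 ⟨y, hyK, by rwa [Real.dist_eq]⟩)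
          have hz0 : (0:ℝ) < |x - y| := lt_of_lt_of_le hρpos hdist
          have hzne : x - y ≠ 0 := abs_pos.mp hz0 |> fun h => by
            intro hzero; rw [hzero, abs_zero] at hz0; exact lt_irrefl _ hz0
          have hne : (x - y) / a ≠ 0 := div_ne_zero hzne ha.ne'
          have s1 : |ψ ((x - y) / a)| ≤ C * (1 + ((x - y) / a) ^ 2) ^ (-δ / 2) := by
            nlinarith [hdec ((x - y) / a), abs_nonneg (((x - y) / a) * deriv ψ ((x - y) / a))]
          have s2 : (1 + ((x - y) / a) ^ 2) ^ (-δ / 2) ≤ (((x - y) / a) ^ 2) ^ (-δ / 2) :=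
            Real.rpow_le_rpow_of_nonpos (by positivity) (by nlinarith) (by linarith)
          have s3 : (((x - y) / a) ^ 2) ^ (-δ / 2) = (|x - y| / a) ^ (-δ) := by
            rw [show ((x - y) / a) ^ 2 = (|x - y| / a) ^ 2 by
              rw [div_pow, div_pow, sq_abs]]
            rw [← Real.rpow_natCast (|x - y| / a) 2, ← Real.rpow_mul (by positivity)]
            congr 1
            push_cast
            ring
          have s4 : (|x - y| / a) ^ (-δ) ≤ (ρ / a) ^ (-δ) :=
            Real.rpow_le_rpow_of_nonpos (by positivity) (by gcongr) (by linarith)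
          have s5 : (1 / a) * (C * (ρ / a) ^ (-δ)) = C * ρ ^ (-δ) * a ^ (δ - 1) := by
            have h6 : a ^ (δ - 1) = a ^ δ / a := by
              rw [Real.rpow_sub ha, Real.rpow_one]
            have h7 : (a:ℝ) ^ (-δ) = (a ^ δ)⁻¹ := by
              rw [Real.rpow_neg ha.le]
            have h8 : a ^ δ ≠ 0 := ne_of_gt (Real.rpow_pos_of_pos ha δ)
            rw [Real.div_rpow hρpos.le ha.le, h6, h7]
            field_simp
          calc ‖(1 / a) * ψ ((x - y) / a)‖ = (1 / a) * |ψ ((x - y) / a)| := by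
                rw [Real.norm_eq_abs, abs_mul, abs_of_pos (by positivity : (0:ℝ) < 1 / a)]
            _ ≤ (1 / a) * (C * (ρ / a) ^ (-δ)) := by
                refine mul_le_mul_of_nonneg_left ?_ (by positivity)
                calc |ψ ((x - y) / a)| ≤ C * (1 + ((x - y) / a) ^ 2) ^ (-δ / 2) := s1
                  _ ≤ C * ((((x - y) / a) ^ 2) ^ (-δ / 2)) :=
                      mul_le_mul_of_nonneg_left s2 hC.le
                  _ = C * (|x - y| / a) ^ (-δ) := by rw [s3]
                  _ ≤ C * (ρ / a) ^ (-δ) := mul_le_mul_of_nonneg_left s4 hC.le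
            _ = C * ρ ^ (-δ) * a ^ (δ - 1) := s5
        have hni := norm_integral_le_of_norm_le_const hbound
        rw [Real.norm_eq_abs] at hni
        refine hni.trans ?_
        rw [measureReal_restrict_apply_univ]
        exact mul_le_mul_of_nonneg_left
          (ENNReal.toReal_mono (measure_ne_top ν _) (measure_mono (Set.subset_univ K))) hM0'
      calc (∫⁻ x in Ioo c d \ U,
            (ENNReal.ofReal |∫ y, (1 / a) * ψ ((x - y) / a) ∂(ν.restrict K)|) ^ p)
          ≤ ∫⁻ _ in Ioo c d \ U,
              ENNReal.ofReal ((C * ρ ^ (-δ) * a ^ (δ - 1) * (ν Set.univ).toReal) ^ p) := by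
            refine setLIntegral_mono measurable_const fun x hx => ?_
            rw [← ENNReal.ofReal_rpow_of_nonneg hM0 hp0.le]
            exact ENNReal.rpow_le_rpow (ENNReal.ofReal_le_ofReal (hpt x hx)) hp0.le
        _ = ENNReal.ofReal ((C * ρ ^ (-δ) * a ^ (δ - 1) * (ν Set.univ).toReal) ^ p)
              * volume (Ioo c d \ U) := setLIntegral_const _ _
        _ ≤ ENNReal.ofReal ((C * ρ ^ (-δ) * a ^ (δ - 1) * (ν Set.univ).toReal) ^ p)
              * ENNReal.ofReal (d - c) := by
            refine mul_le_mul_right ?_ _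
            exact (measure_mono Set.diff_subset).trans Real.volume_Ioo.le
        _ = ENNReal.ofReal ((d - c) * (C * ρ ^ (-δ) * a ^ (δ - 1) * (ν Set.univ).toReal) ^ p) := by
            rw [← ENNReal.ofReal_mul (Real.rpow_nonneg hM0 _), mul_comm]
    exact add_le_add hT1a hT1b
  -- Put everything together
  calc (∫⁻ x in Ioo c d, (ENNReal.ofReal |∫ y, (1 / a) * ψ ((x - y) / a) ∂ν|) ^ p)
      ≤ _ := hB
    _ ≤ (ENNReal.ofReal ((((∫ x, |ψ x|) * (ν Set.univ).toReal) ^ p) * ε ^ (1 - p))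
          + ENNReal.ofReal ((d - c) * (C * ρ ^ (-δ) * a ^ (δ - 1) * (ν Set.univ).toReal) ^ p))
        + ENNReal.ofReal (((d - c) ^ (1 - p) * (∫ x, |ψ x|) ^ p) * ε ^ p) :=
        add_le_add hT1 hT2
    _ ≤ ENNReal.ofReal θ := by
        rw [← ENNReal.ofReal_add (mul_nonneg hc₂0 (Real.rpow_nonneg hε0.le _))
            (mul_nonneg (by linarith) (Real.rpow_nonneg hM0 _)),
          ← ENNReal.ofReal_add (add_nonneg (mul_nonneg hc₂0 (Real.rpow_nonneg hε0.le _))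
            (mul_nonneg (by linarith) (Real.rpow_nonneg hM0 _)))
            (mul_nonneg hc₁0 (Real.rpow_nonneg hε0.le _))]
        apply ENNReal.ofReal_le_ofReal
        linarith
end

section
/- Let ψ: ℝ → ℝ be C¹ with ψ even, and suppose there exist C>0 and δ>1 such that |ψ(x)| + |x·ψ'(x)| ≤ C·(1+x²)^{-δ/2} for all x ∈ ℝ. Let μ be a probability measure on ℝ with distribution function Φ_μ(t) = μ((−∞, t]). Then for every x ∈ ℝ and a > 0, (ψ_a * μ)(x) = −∫_0^∞ ψ'(y)·(Φ_μ(x+ay) − Φ_μ(x−ay)) dy, where ψ_a(x) = ψ(x/a) and (ψ_a * μ)(x) = ∫_ℝ ψ_a(x−y) dμ(y). -/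
/-!
An even `ψ` vanishing at infinity satisfies `ψ u = -∫_{|u|}^∞ ψ'`. Since
`{t | y ∈ (x - a t, x + a t]}` differs from `(|x - y| / a, ∞)` by at most one point, this gives
`ψ ((x - y) / a) = -∫_0^∞ ψ'(t) 𝟙{y ∈ (x - a t, x + a t]} dt`. The decay bound makes `ψ'`
integrable on `(0, ∞)`, so Fubini applies after integrating in `y`, and the indicator integrates
to `μ (x - a t, x + a t] = Φ_μ(x + a t) - Φ_μ(x - a t)`.
-/

open MeasureTheory Filter Real Set Topology

theorem rpow_one_add_sq_neg_half_le {t δ : ℝ} (ht : 0 < t) (hδ : 0 ≤ δ) :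
    (1 + t ^ 2) ^ (-δ / 2) ≤ t ^ (-δ) := by
  calc (1 + t ^ 2) ^ (-δ / 2) ≤ (t ^ 2) ^ (-δ / 2) :=
        rpow_le_rpow_of_nonpos (by positivity) (by linarith) (by linarith)
    _ = t ^ (-δ) := by
        rw [← rpow_natCast, ← rpow_mul ht.le]
        congr 1; ring

theorem isBigO_atTop_rpow_neg_of_abs_le {f : ℝ → ℝ} {C δ : ℝ} (hδ : 0 ≤ δ)
    (hf : ∀ t, |f t| ≤ C * (1 + t ^ 2) ^ (-δ / 2)) :
    f =O[atTop] fun t ↦ t ^ (-δ) := by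
  refine Asymptotics.IsBigO.of_bound |C| ?_
  filter_upwards [eventually_gt_atTop 0] with t ht
  rw [norm_eq_abs, norm_of_nonneg (rpow_nonneg ht.le _)]
  calc |f t| ≤ |C| * (1 + t ^ 2) ^ (-δ / 2) :=
        (hf t).trans (mul_le_mul_of_nonneg_right (le_abs_self C) (by positivity))
    _ ≤ |C| * t ^ (-δ) :=
        mul_le_mul_of_nonneg_left (rpow_one_add_sq_neg_half_le ht hδ) (abs_nonneg C)

theorem tendsto_atTop_zero_of_abs_le {f : ℝ → ℝ} {C δ : ℝ} (hδ : 0 < δ)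
    (hf : ∀ t, |f t| ≤ C * (1 + t ^ 2) ^ (-δ / 2)) : Tendsto f atTop (𝓝 0) :=
  (isBigO_atTop_rpow_neg_of_abs_le hδ.le hf).trans_tendsto (tendsto_rpow_neg_atTop hδ)

theorem integrableOn_Ioi_of_abs_mul_le {g : ℝ → ℝ} (hg : Continuous g) {C δ : ℝ} (hδ : 1 < δ)
    (hbound : ∀ t, |t * g t| ≤ C * (1 + t ^ 2) ^ (-δ / 2)) : IntegrableOn g (Ioi 0) := by
  have hO : g =O[atTop] fun t ↦ t ^ (-1 : ℝ) * t ^ (-δ) := by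
    refine ((Asymptotics.isBigO_refl (fun t : ℝ ↦ t ^ (-1 : ℝ)) atTop).mul
      (isBigO_atTop_rpow_neg_of_abs_le (by linarith) hbound)).congr' ?_ EventuallyEq.rfl
    filter_upwards [eventually_gt_atTop 0] with t ht
    rw [rpow_neg_one, inv_mul_cancel_left₀ ht.ne']
  have hO' : g =O[atTop] fun t ↦ t ^ (-δ - 1) := by
    refine hO.congr' EventuallyEq.rfl ?_
    filter_upwards [eventually_gt_atTop 0] with t ht
    rw [← rpow_add ht]; ring_nf
  refine (hg.locallyIntegrable.locallyIntegrableOn _).integrableOn_of_isBigO_atTop hO'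
    (integrableAtFilter_rpow_atTop_iff.2 (by linarith)) |>.mono_set Ioi_subset_Ici_self

theorem eq_neg_integral_Ioi_abs_deriv {ψ : ℝ → ℝ} (hψ : Differentiable ℝ ψ)
    (heven : ∀ x, ψ (-x) = ψ x) (hint : IntegrableOn (deriv ψ) (Ioi 0))
    (htend : Tendsto ψ atTop (𝓝 0)) (u : ℝ) : ψ u = -∫ t in Ioi |u|, deriv ψ t := by
  have hψ_abs : ψ |u| = ψ u := by
    rcases abs_choice u with h | h <;> rw [h]
    exact heven u
  rw [integral_Ioi_of_hasDerivAt_of_tendsto hψ.continuous.continuousWithinAt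
    (fun t _ ↦ (hψ t).hasDerivAt) (hint.mono_set (Ioi_subset_Ioi (abs_nonneg u))) htend,
    hψ_abs, zero_sub, neg_neg]

theorem setOf_mem_Ioc_sub_add_ae_eq {a : ℝ} (ha : 0 < a) (x y : ℝ) :
    {t : ℝ | y ∈ Ioc (x - a * t) (x + a * t)} =ᵐ[volume] Ioi (|x - y| / a) := by
  have hsub : Ioi (|x - y| / a) ⊆ {t : ℝ | y ∈ Ioc (x - a * t) (x + a * t)} := fun t ht ↦ by
    rw [mem_Ioi, div_lt_iff₀' ha, abs_lt] at ht
    constructor <;> linarith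
  have hsup : {t : ℝ | y ∈ Ioc (x - a * t) (x + a * t)} ⊆ Ici (|x - y| / a) := fun t ht ↦ by
    rw [mem_Ici, div_le_iff₀' ha, abs_le]
    constructor <;> linarith [ht.1, ht.2]
  exact (hsup.eventuallyLE.trans Ioi_ae_eq_Ici.symm.le).antisymm hsub.eventuallyLE

theorem setIntegral_Ioi_indicator_mem_Ioc_sub_add {E : Type*} [NormedAddCommGroup E]
    [NormedSpace ℝ E] {a : ℝ} (ha : 0 < a) (x y : ℝ) (g : ℝ → E) :
    ∫ t in Ioi 0, {t | y ∈ Ioc (x - a * t) (x + a * t)}.indicator g t =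
      ∫ t in Ioi (|x - y| / a), g t := by
  have hmeas : MeasurableSet {t : ℝ | y ∈ Ioc (x - a * t) (x + a * t)} :=
    (measurableSet_lt (f := fun t ↦ x - a * t) (by fun_prop) measurable_const).inter
      (measurableSet_le (g := fun t ↦ x + a * t) measurable_const (by fun_prop))
  have hpos : {t : ℝ | y ∈ Ioc (x - a * t) (x + a * t)} ⊆ Ioi 0 := fun t ht ↦ by
    have := ht.1.trans_le ht.2
    rw [mem_Ioi]; nlinarith
  rw [setIntegral_indicator hmeas, inter_eq_right.2 hpos,
    setIntegral_congr_set (setOf_mem_Ioc_sub_add_ae_eq ha x y)]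

theorem integral_integral_indicator_eq_integral_measureReal_smul {α β E : Type*}
    [MeasurableSpace α] [MeasurableSpace β] [NormedAddCommGroup E] [NormedSpace ℝ E]
    [CompleteSpace E] {μ : Measure α} [IsFiniteMeasure μ] {ν : Measure β} [SFinite ν]
    {s : Set (α × β)} (hs : MeasurableSet s) {g : β → E} (hg : Integrable g ν) :
    ∫ y, ∫ t, s.indicator (fun z ↦ g z.2) (y, t) ∂ν ∂μ =
      ∫ t, μ.real {y | (y, t) ∈ s} • g t ∂ν := by
  rw [integral_integral_swap (f := fun y t ↦ s.indicator (fun z ↦ g z.2) (y, t))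
    ((hg.comp_snd μ).indicator hs)]
  refine integral_congr_ae (ae_of_all _ fun t ↦ ?_)
  exact integral_indicator_const (g t) (measurable_prodMk_right hs)

theorem measureReal_Ioc_eq_sub {α : Type*} [LinearOrder α] [TopologicalSpace α]
    [OrderClosedTopology α] [MeasurableSpace α] [OpensMeasurableSpace α] (μ : Measure α)
    [IsFiniteMeasure μ] {l r : α} (h : l ≤ r) :
    μ.real (Ioc l r) = μ.real (Iic r) - μ.real (Iic l) := by
  rw [← Iic_union_Ioc_eq_Iic h, measureReal_union (Iic_disjoint_Ioc le_rfl) measurableSet_Ioc]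
  ring

/-- Equation (3.1): for even `ψ` with the standing decay assumption and a probability
measure `μ` with distribution function `Φ_μ(t) = μ((-∞,t])`,
`(ψ_a * μ)(x) = -∫_0^∞ ψ'(y) (Φ_μ(x+ay) - Φ_μ(x-ay)) dy`. -/
theorem conv_eq_integral_of_distribution_increments
    (ψ : ℝ → ℝ) (hC1 : ContDiff ℝ 1 ψ)
    (heven : ∀ x : ℝ, ψ (-x) = ψ x)
    (hdecay : ∃ C > (0:ℝ), ∃ δ > (1:ℝ), ∀ x : ℝ,
      |ψ x| + |x * deriv ψ x| ≤ C * (1 + x ^ 2) ^ (-δ / 2))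
    (μ : Measure ℝ) [IsProbabilityMeasure μ] (x : ℝ) (a : ℝ) (ha : 0 < a) :
    ∫ y : ℝ, ψ ((x - y) / a) ∂μ =
      -∫ y in Ioi (0:ℝ),
        deriv ψ y * ((μ (Iic (x + a * y))).toReal - (μ (Iic (x - a * y))).toReal) := by
  obtain ⟨C, -, δ, hδ, hbound⟩ := hdecay
  have htend : Tendsto ψ atTop (𝓝 0) := tendsto_atTop_zero_of_abs_le (by linarith)
    fun t ↦ (le_add_of_nonneg_right (abs_nonneg _)).trans (hbound t)
  have hint : IntegrableOn (deriv ψ) (Ioi 0) := integrableOn_Ioi_of_abs_mul_le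
    (hC1.continuous_deriv le_rfl) hδ
    fun t ↦ (le_add_of_nonneg_left (abs_nonneg _)).trans (hbound t)
  set s : Set (ℝ × ℝ) := {z | z.1 ∈ Ioc (x - a * z.2) (x + a * z.2)}
  have hs : MeasurableSet s :=
    (measurableSet_lt (f := fun z : ℝ × ℝ ↦ x - a * z.2) (by fun_prop) measurable_fst).inter
      (measurableSet_le (g := fun z : ℝ × ℝ ↦ x + a * z.2) measurable_fst (by fun_prop))
  calc ∫ y, ψ ((x - y) / a) ∂μ
      = ∫ y, (-∫ t in Ioi 0, s.indicator (fun z ↦ deriv ψ z.2) (y, t)) ∂μ := by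
        congr 1 with y
        rw [eq_neg_integral_Ioi_abs_deriv (hC1.differentiable one_ne_zero) heven hint htend,
          abs_div, abs_of_pos ha, ← setIntegral_Ioi_indicator_mem_Ioc_sub_add ha x y (deriv ψ)]
        rfl
    _ = -∫ t in Ioi 0, μ.real {y | (y, t) ∈ s} • deriv ψ t := by
        rw [integral_neg,
          integral_integral_indicator_eq_integral_measureReal_smul (μ := μ) hs hint]
    _ = _ := by
        congr 1
        refine setIntegral_congr_fun measurableSet_Ioi fun t ht ↦ ?_
        have hlr : x - a * t ≤ x + a * t := by nlinarith [mem_Ioi.1 ht]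
        rw [smul_eq_mul, mul_comm]
        exact congrArg (deriv ψ t * ·) (measureReal_Ioc_eq_sub μ hlr)
end
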